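/- For fixed t > 0, the function g(η) = (1/2)[exp(2η√(dt))·erfc(η + √(dt)) + exp(−2η√(dt))·erfc(η − √(dt))], with d > 0, satisfies g(0) = 1, g is strictly decreasing in η on [0, ∞), and g(η) → 0 as η → ∞. -/

import Mathlib

/-!
Write `c = √(d t)` and `erfcx y = exp (y²) erfc y`. Then
`g η = ½ exp (-η² - c²) (erfcx (η + c) + erfcx (η - c))` and
`g' η = exp (-η² - c²) (c (erfcx (η + c) - erfcx (η - c)) - 2 / √π)`.
Mills' inequality `x erfc x ≤ exp (-x²) / √π` says exactly that `erfcx` is antitone, so the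
first summand of `g'` is `≤ 0` and `g' < 0`. Antitonicity also gives
`erfcx ≤ erfcx 0 = 1` on `[0, ∞)`, hence `0 ≤ g η ≤ exp (-η² - c²)` for `η ≥ |c|`.
Finally `g 0 = 1` is the symmetry `erfc c + erfc (-c) = 2`.
-/

open Real Filter MeasureTheory Set Topology

noncomputable def erfc (x : ℝ) : ℝ :=
  (2 / Real.sqrt Real.pi) * ∫ s in Set.Ioi x, Real.exp (-s ^ 2)

noncomputable def erfcx (y : ℝ) : ℝ :=
  exp (y ^ 2) * erfc y

/-- The function `g` of the statement, written with `c = √(d t)`. -/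
noncomputable def heatProfile (c η : ℝ) : ℝ :=
  (1 / 2) * (exp (2 * η * c) * erfc (η + c) + exp (-(2 * η * c)) * erfc (η - c))

lemma integrable_exp_neg_sq : Integrable fun s : ℝ => exp (-s ^ 2) := by
  simpa using integrable_exp_neg_mul_sq one_pos

lemma integral_exp_neg_sq : ∫ s : ℝ, exp (-s ^ 2) = √π := by
  simpa using integral_gaussian 1

lemma integral_Ioi_mul_exp_neg_sq (a : ℝ) :
    ∫ s in Ioi a, s * exp (-s ^ 2) = exp (-a ^ 2) / 2 := by
  have hderiv (x : ℝ) : HasDerivAt (fun s : ℝ => -exp (-s ^ 2) / 2) (x * exp (-x ^ 2)) x := by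
    refine (((hasDerivAt_pow 2 x).fun_neg.exp).fun_neg.div_const 2).congr_deriv ?_
    push_cast
    ring
  have hint : IntegrableOn (fun s : ℝ => s * exp (-s ^ 2)) (Ioi a) := by
    simpa using (integrable_mul_exp_neg_mul_sq one_pos).integrableOn
  have hlim : Tendsto (fun s : ℝ => -exp (-s ^ 2) / 2) atTop (𝓝 0) := by
    simpa using ((tendsto_exp_atBot.comp
      (tendsto_neg_atBot_iff.2 (tendsto_pow_atTop two_ne_zero))).neg.div_const 2)
  rw [integral_Ioi_of_hasDerivAt_of_tendsto' (fun x _ => hderiv x) hint hlim]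
  ring

/-- Mills' inequality, obtained by comparing `x` with `s` on `Ioi x`. -/
lemma mul_integral_Ioi_exp_neg_sq_le (x : ℝ) :
    x * ∫ s in Ioi x, exp (-s ^ 2) ≤ exp (-x ^ 2) / 2 := by
  rw [← integral_const_mul, ← integral_Ioi_mul_exp_neg_sq]
  refine setIntegral_mono_on (integrable_exp_neg_sq.const_mul x).integrableOn
    (by simpa using (integrable_mul_exp_neg_mul_sq one_pos).integrableOn) measurableSet_Ioi
    fun s hs => ?_
  exact mul_le_mul_of_nonneg_right (le_of_lt hs) (exp_pos _).le

lemma erfc_add_erfc_neg (x : ℝ) : erfc x + erfc (-x) = 2 := by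
  have hflip : ∫ s in Ioi x, exp (-s ^ 2) = ∫ s in Iic (-x), exp (-s ^ 2) := by
    rw [← integral_comp_neg_Ioi]; simp
  rw [erfc, erfc, ← mul_add, hflip, intervalIntegral.integral_Iic_add_Ioi
    integrable_exp_neg_sq.integrableOn integrable_exp_neg_sq.integrableOn,
    integral_exp_neg_sq, div_mul_cancel₀ _ (sqrt_pos.2 pi_pos).ne']

lemma erfc_nonneg (x : ℝ) : 0 ≤ erfc x :=
  mul_nonneg (by positivity) (setIntegral_nonneg measurableSet_Ioi fun _ _ => (exp_pos _).le)

lemma erfc_eq_sub_intervalIntegral (x : ℝ) :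
    erfc x = (2 / √π) * ((∫ s in Ioi 0, exp (-s ^ 2)) - ∫ s in 0..x, exp (-s ^ 2)) := by
  have hint := integrable_exp_neg_sq.integrableOn (s := Iic 0)
  have hint' := integrable_exp_neg_sq.integrableOn (s := Iic x)
  have h0 := intervalIntegral.integral_Iic_add_Ioi hint integrable_exp_neg_sq.integrableOn
  have hx := intervalIntegral.integral_Iic_add_Ioi hint' integrable_exp_neg_sq.integrableOn
  have hsub := intervalIntegral.integral_Iic_sub_Iic hint hint'
  rw [erfc]
  congr 1
  linarith

lemma hasDerivAt_erfc (x : ℝ) : HasDerivAt erfc (-(2 / √π * exp (-x ^ 2))) x := by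
  have hcont : Continuous fun s : ℝ => exp (-s ^ 2) := by fun_prop
  have hprim : HasDerivAt (fun y => ∫ s in 0..y, exp (-s ^ 2)) (exp (-x ^ 2)) x :=
    intervalIntegral.integral_hasDerivAt_right (hcont.intervalIntegrable 0 x)
      hcont.aestronglyMeasurable.stronglyMeasurableAtFilter hcont.continuousAt
  rw [show erfc = _ from funext erfc_eq_sub_intervalIntegral]
  simpa using ((hasDerivAt_const x _).sub hprim).const_mul (2 / √π)

lemma erfcx_zero : erfcx 0 = 1 := by
  have h := erfc_add_erfc_neg 0
  rw [neg_zero] at h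
  rw [erfcx, zero_pow two_ne_zero, exp_zero, one_mul]
  linarith

lemma mul_erfcx_le (x : ℝ) : x * erfcx x ≤ 1 / √π := by
  have hsq : exp (x ^ 2) * exp (-x ^ 2) = 1 := by rw [← exp_add]; simp
  calc x * erfcx x = 2 / √π * exp (x ^ 2) * (x * ∫ s in Ioi x, exp (-s ^ 2)) := by
        rw [erfcx, erfc]; ring
    _ ≤ 2 / √π * exp (x ^ 2) * (exp (-x ^ 2) / 2) :=
        mul_le_mul_of_nonneg_left (mul_integral_Ioi_exp_neg_sq_le x) (by positivity)
    _ = 1 / √π := by linear_combination (1 / √π) * hsq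

lemma hasDerivAt_erfcx (x : ℝ) : HasDerivAt erfcx (2 * x * erfcx x - 2 / √π) x := by
  have hsq : exp (x ^ 2) * exp (-x ^ 2) = 1 := by rw [← exp_add]; simp
  refine (((hasDerivAt_pow 2 x).exp).mul (hasDerivAt_erfc x)).congr_deriv ?_
  rw [erfcx]
  push_cast
  linear_combination (-(2 / √π)) * hsq

lemma erfcx_antitone : Antitone erfcx := by
  refine antitone_of_deriv_nonpos (fun x => (hasDerivAt_erfcx x).differentiableAt) fun x => ?_
  rw [(hasDerivAt_erfcx x).deriv, mul_assoc, div_eq_mul_one_div 2 √π]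
  linarith [mul_erfcx_le x]

lemma erfcx_le_one {y : ℝ} (hy : 0 ≤ y) : erfcx y ≤ 1 :=
  erfcx_zero ▸ erfcx_antitone hy

lemma heatProfile_eq (c η : ℝ) :
    heatProfile c η = (1 / 2) * exp (-η ^ 2 - c ^ 2) * (erfcx (η + c) + erfcx (η - c)) := by
  have hplus : exp (2 * η * c) = exp (-η ^ 2 - c ^ 2) * exp ((η + c) ^ 2) := by
    rw [← exp_add]; ring_nf
  have hminus : exp (-(2 * η * c)) = exp (-η ^ 2 - c ^ 2) * exp ((η - c) ^ 2) := by
    rw [← exp_add]; ring_nf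
  rw [heatProfile, erfcx, erfcx, hplus, hminus]
  ring

lemma heatProfile_nonneg (c η : ℝ) : 0 ≤ heatProfile c η := by
  have hplus := mul_nonneg (exp_pos (2 * η * c)).le (erfc_nonneg (η + c))
  have hminus := mul_nonneg (exp_pos (-(2 * η * c))).le (erfc_nonneg (η - c))
  exact mul_nonneg (by norm_num) (add_nonneg hplus hminus)

lemma heatProfile_zero (c : ℝ) : heatProfile c 0 = 1 := by
  have := erfc_add_erfc_neg c
  simp only [heatProfile, mul_zero, zero_mul, neg_zero, exp_zero, one_mul, zero_add, zero_sub]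
  linarith

lemma hasDerivAt_heatProfile (c η : ℝ) :
    HasDerivAt (heatProfile c)
      (exp (-η ^ 2 - c ^ 2) * (c * (erfcx (η + c) - erfcx (η - c)) - 2 / √π)) η := by
  have hexp : HasDerivAt (fun η => exp (-η ^ 2 - c ^ 2)) (exp (-η ^ 2 - c ^ 2) * (-(2 * η))) η := by
    refine (((hasDerivAt_pow 2 η).fun_neg.sub_const (c ^ 2)).exp).congr_deriv ?_
    push_cast
    ring
  have hplus := (hasDerivAt_erfcx (η + c)).comp_add_const η c
  have hminus := (hasDerivAt_erfcx (η - c)).comp_sub_const η c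
  rw [show heatProfile c = _ from funext (heatProfile_eq c)]
  refine ((hexp.const_mul (1 / 2)).mul (hplus.fun_add hminus)).congr_deriv ?_
  ring

lemma heatProfile_strictAnti (c : ℝ) : StrictAnti (heatProfile c) := by
  refine strictAnti_of_deriv_neg fun η => ?_
  rw [(hasDerivAt_heatProfile c η).deriv]
  -- `erfcx` is antitone, so `erfcx (η + c) - erfcx (η - c)` has the sign opposite to `c`
  have hsign : c * (erfcx (η + c) - erfcx (η - c)) ≤ 0 := by
    rcases le_total 0 c with hc | hc
    · exact mul_nonpos_of_nonneg_of_nonpos hc (sub_nonpos.2 (erfcx_antitone (by linarith)))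
    · exact mul_nonpos_of_nonpos_of_nonneg hc (sub_nonneg.2 (erfcx_antitone (by linarith)))
  have : 0 < 2 / √π := by positivity
  exact mul_neg_of_pos_of_neg (exp_pos _) (by linarith)

lemma heatProfile_le {c η : ℝ} (hη : |c| ≤ η) : heatProfile c η ≤ exp (-η ^ 2 - c ^ 2) := by
  have hplus := erfcx_le_one (y := η + c) (by linarith [neg_abs_le c])
  have hminus := erfcx_le_one (y := η - c) (by linarith [le_abs_self c])
  rw [heatProfile_eq]
  nlinarith [exp_pos (-η ^ 2 - c ^ 2)]

lemma tendsto_heatProfile_atTop (c : ℝ) : Tendsto (heatProfile c) atTop (𝓝 0) := by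
  have hexp : Tendsto (fun η : ℝ => exp (-η ^ 2 - c ^ 2)) atTop (𝓝 0) :=
    tendsto_exp_atBot.comp (tendsto_atBot_add_const_right _ _
      (tendsto_neg_atBot_iff.2 (tendsto_pow_atTop two_ne_zero)))
  exact squeeze_zero' (Eventually.of_forall (heatProfile_nonneg c))
    ((eventually_ge_atTop |c|).mono fun η => heatProfile_le) hexp

theorem stmt_8_general (t d : ℝ) :
    (let g : ℝ → ℝ := fun η =>
      (1 / 2) * (Real.exp (2 * η * Real.sqrt (d * t)) * erfc (η + Real.sqrt (d * t))
        + Real.exp (-(2 * η * Real.sqrt (d * t))) * erfc (η - Real.sqrt (d * t)))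
     g 0 = 1 ∧ StrictAntiOn g (Set.Ici 0) ∧ Filter.Tendsto g Filter.atTop (nhds 0)) :=
  ⟨heatProfile_zero _, (heatProfile_strictAnti _).strictAntiOn _, tendsto_heatProfile_atTop _⟩

theorem stmt_8 (t d : ℝ) (ht : 0 < t) (hd : 0 < d) :
    (let g : ℝ → ℝ := fun η =>
      (1 / 2) * (Real.exp (2 * η * Real.sqrt (d * t)) * erfc (η + Real.sqrt (d * t))
        + Real.exp (-(2 * η * Real.sqrt (d * t))) * erfc (η - Real.sqrt (d * t)))
     g 0 = 1 ∧ StrictAntiOn g (Set.Ici 0) ∧ Filter.Tendsto g Filter.atTop (nhds 0)) :=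
  stmt_8_general t d
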